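/- arXiv:2004.14434 — 2 statements merged into one kernel-verified Lean document; each statement's English description precedes it below -/
import Mathlib

section
/- Let ν > -1 and let μ_ν be the measure on (0,∞) with density x^{2ν+1} dx. Then for all x, r > 0, μ_ν(B(x,r)) is comparable to min(1, r/x)·(x+r)^{2ν+2}, i.e. there exist constants C₁, C₂ > 0 depending only on ν such that C₁·min(1, r/x)·(x+r)^{2ν+2} ≤ μ_ν(B(x,r)) ≤ C₂·min(1, r/x)·(x+r)^{2ν+2}. -/
/-!
With `p = 2ν + 2`, `a = max (x - r) 0` and `b = x + r` one has `μ_ν(B(x,r)) = (b^p - a^p) / p`.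
Bernoulli's inequality makes `1 - t^p` comparable to `1 - t` on `[0,1]`, with constants
`min 1 p` and `max 1 p`; taking `t = a / b` gives `b^p - a^p ≍ ((b - a) / b) · b^p`, and
`(b - a) / b` lies between `min 1 (r / x)` and twice that.
-/

open MeasureTheory Set

/-- The measure on `(0,∞)` with density `x^(2ν+1) dx`. -/
noncomputable def besselMeasure (ν : ℝ) : Measure ℝ :=
  (volume.restrict (Set.Ioi (0:ℝ))).withDensity fun x => ENNReal.ofReal (x ^ (2*ν+1))

section ball

variable {x r : ℝ}

theorem min_one_div_le_sub_max_div_add (hx : 0 < x) (hr : 0 < r) :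
    min 1 (r / x) ≤ (x + r - max (x - r) 0) / (x + r) := by
  rcases le_total x r with h | h
  · rw [max_eq_right (by linarith), sub_zero, div_self (by positivity)]
    exact min_le_left _ _
  · rw [max_eq_left (by linarith), min_eq_right ((div_le_one hx).2 h),
      div_le_div_iff₀ hx (by positivity)]
    nlinarith

theorem sub_max_div_add_le_two_mul_min (hx : 0 < x) (hr : 0 < r) :
    (x + r - max (x - r) 0) / (x + r) ≤ 2 * min 1 (r / x) := by
  rcases le_total x r with h | h
  · rw [max_eq_right (by linarith), sub_zero, div_self (by positivity),
      min_eq_left ((one_le_div hx).2 h)]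
    norm_num
  · rw [max_eq_left (by linarith), min_eq_right ((div_le_one hx).2 h),
      div_le_iff₀ (by positivity), mul_div_assoc', div_mul_eq_mul_div, le_div_iff₀ hx]
    nlinarith

end ball

namespace Real

variable {p t a b x r : ℝ}

theorem min_one_mul_one_sub_le_one_sub_rpow (hp : 0 ≤ p) (ht₀ : 0 ≤ t) (ht₁ : t ≤ 1) :
    min 1 p * (1 - t) ≤ 1 - t ^ p := by
  rcases le_total 1 p with h | h
  · rw [min_eq_left h]
    linarith [rpow_le_self_of_le_one ht₀ ht₁ h]
  · have := rpow_one_add_le_one_add_mul_self (s := t - 1) (by linarith) hp h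
    rw [add_sub_cancel] at this
    rw [min_eq_right h]
    linarith

theorem one_sub_rpow_le_max_one_mul_one_sub (ht₀ : 0 ≤ t) (ht₁ : t ≤ 1) :
    1 - t ^ p ≤ max 1 p * (1 - t) := by
  rcases le_total 1 p with h | h
  · have := one_add_mul_self_le_rpow_one_add (s := t - 1) (by linarith) h
    rw [add_sub_cancel] at this
    rw [max_eq_right h]
    linarith
  · rw [max_eq_left h]
    linarith [self_le_rpow_of_le_one ht₀ ht₁ h]

theorem rpow_sub_rpow_eq_mul_one_sub (ha : 0 ≤ a) (hb : 0 < b) :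
    b ^ p - a ^ p = b ^ p * (1 - (a / b) ^ p) := by
  rw [div_rpow ha hb.le, mul_sub, mul_div_cancel₀ _ (rpow_pos_of_pos hb p).ne', mul_one]

theorem min_one_mul_sub_div_mul_rpow_le (hp : 0 ≤ p) (ha : 0 ≤ a) (hab : a ≤ b) (hb : 0 < b) :
    min 1 p * ((b - a) / b) * b ^ p ≤ b ^ p - a ^ p := by
  rw [rpow_sub_rpow_eq_mul_one_sub ha hb, sub_div, div_self hb.ne', mul_comm (b ^ p)]
  exact mul_le_mul_of_nonneg_right
    (min_one_mul_one_sub_le_one_sub_rpow hp (by positivity) ((div_le_one hb).2 hab))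
    (rpow_nonneg hb.le p)

theorem rpow_sub_rpow_le_max_one_mul_sub_div_mul (ha : 0 ≤ a) (hab : a ≤ b) (hb : 0 < b) :
    b ^ p - a ^ p ≤ max 1 p * ((b - a) / b) * b ^ p := by
  rw [rpow_sub_rpow_eq_mul_one_sub ha hb, sub_div, div_self hb.ne', mul_comm (b ^ p)]
  exact mul_le_mul_of_nonneg_right
    (one_sub_rpow_le_max_one_mul_one_sub (by positivity) ((div_le_one hb).2 hab))
    (rpow_nonneg hb.le p)

theorem min_one_div_mul_rpow_le_rpow_add_sub_rpow_max (hp : 0 ≤ p) (hx : 0 < x) (hr : 0 < r) :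
    min 1 p * min 1 (r / x) * (x + r) ^ p ≤ (x + r) ^ p - max (x - r) 0 ^ p :=
  calc min 1 p * min 1 (r / x) * (x + r) ^ p
      ≤ min 1 p * ((x + r - max (x - r) 0) / (x + r)) * (x + r) ^ p := by
        gcongr
        exact min_one_div_le_sub_max_div_add hx hr
    _ ≤ (x + r) ^ p - max (x - r) 0 ^ p :=
        min_one_mul_sub_div_mul_rpow_le hp (le_max_right _ _)
          (max_le (by linarith) (by linarith)) (by positivity)

theorem rpow_add_sub_rpow_max_le_two_mul_min_one_div_mul (hx : 0 < x) (hr : 0 < r) :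
    (x + r) ^ p - max (x - r) 0 ^ p ≤ 2 * max 1 p * min 1 (r / x) * (x + r) ^ p :=
  calc (x + r) ^ p - max (x - r) 0 ^ p
      ≤ max 1 p * ((x + r - max (x - r) 0) / (x + r)) * (x + r) ^ p :=
        rpow_sub_rpow_le_max_one_mul_sub_div_mul (le_max_right _ _)
          (max_le (by linarith) (by linarith)) (by positivity)
    _ ≤ max 1 p * (2 * min 1 (r / x)) * (x + r) ^ p := by
        gcongr
        exact sub_max_div_add_le_two_mul_min hx hr
    _ = 2 * max 1 p * min 1 (r / x) * (x + r) ^ p := by ring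

end Real

theorem besselMeasure_Ioo {ν : ℝ} (hν : -1 < ν) {a b : ℝ} (hab : a ≤ b) (hb : 0 ≤ b) :
    besselMeasure ν (Ioo a b) =
      ENNReal.ofReal ((b ^ (2*ν+2) - max a 0 ^ (2*ν+2)) / (2*ν+2)) := by
  have hexp : -1 < 2*ν+1 := by linarith
  rw [besselMeasure, withDensity_apply _ measurableSet_Ioo,
    Measure.restrict_restrict measurableSet_Ioo, Ioo_inter_Ioi,
    ← ofReal_integral_eq_lintegral_ofReal, ← integral_Ioc_eq_integral_Ioo,
    ← intervalIntegral.integral_of_le (max_le hab hb), integral_rpow (Or.inl hexp)]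
  · ring_nf
  · exact (intervalIntegral.intervalIntegrable_rpow' hexp).1.mono_set Ioo_subset_Ioc_self
  · filter_upwards [ae_restrict_mem measurableSet_Ioo] with y hy
    exact Real.rpow_nonneg ((le_max_right a 0).trans hy.1.le) _

theorem measure_ball_comparable_of_neg_one_lt (ν : ℝ) (hν : -1 < ν) :
    ∃ C₁ C₂ : ℝ, 0 < C₁ ∧ 0 < C₂ ∧ ∀ x r : ℝ, 0 < x → 0 < r →
      ENNReal.ofReal (C₁ * min 1 (r / x) * (x + r) ^ (2*ν+2)) ≤
        besselMeasure ν (Metric.ball x r) ∧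
      besselMeasure ν (Metric.ball x r) ≤
        ENNReal.ofReal (C₂ * min 1 (r / x) * (x + r) ^ (2*ν+2)) := by
  have hp : 0 < 2*ν+2 := by linarith
  refine ⟨min 1 (2*ν+2) / (2*ν+2), 2 * max 1 (2*ν+2) / (2*ν+2), by positivity, by positivity,
    fun x r hx hr => ?_⟩
  rw [Real.ball_eq_Ioo, besselMeasure_Ioo hν (by linarith) (by linarith)]
  simp only [div_mul_eq_mul_div]
  exact ⟨ENNReal.ofReal_le_ofReal <| div_le_div_of_nonneg_right
      (Real.min_one_div_mul_rpow_le_rpow_add_sub_rpow_max hp.le hx hr) hp.le,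
    ENNReal.ofReal_le_ofReal <| div_le_div_of_nonneg_right
      (Real.rpow_add_sub_rpow_max_le_two_mul_min_one_div_mul hx hr) hp.le⟩
end

section
/- Let ν > -1, δ ∈ (0, min(1/2, ν+1)) and c > 0. Then there exists C > 0 such that for every interval Q ⊂ (0,∞) and every y ∈ Q*, ∫_{Q**} sup_{t>0} t^δ · μ_ν(B(x,√t))^{-1} · exp(−|x−y|²/(ct)) dμ_ν(x) ≤ C·d_Q^{2δ}, where d_Q is the diameter of Q, Q* and Q** are concentric enlargements of Q by fixed factors κ, κ² with κ > 1 close to 1, and μ_ν has density x^{2ν+1} on (0,∞). -/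
open MeasureTheory Set

/-- The concentric enlargement by a factor `κ` of the interval `[a,b]`. -/
def enl (κ a b : ℝ) : Set ℝ :=
  Set.Icc ((a + b) / 2 - κ * (b - a) / 2) ((a + b) / 2 + κ * (b - a) / 2)

/-!
Write `p = 2ν+1`, `γ = 2δ-1 ∈ (-1, 0)` and `r = √t`. The ball `B(x, r)` contains `(x + r/2, x + r)`,
so `μ_ν(B(x, r)) ≳ r (x+r)^p`, and the density `x^p` times the integrand is
`≲ (x/(x+r))^p r^γ e^{-|x-y|²/(cr²)}`. For `r ≤ x` the ratio `x/(x+r)` is comparable to `1`; for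
`x ≤ r` it is comparable to `x/r`, and `x^p r^(γ-p) ≤ x^γ` because `γ ≤ p`. Since `γ < 0`,
`sup_r r^γ e^{-s²/(cr²)} ≲ s^γ`, so the product is `≲ |x-y|^γ + x^γ`. Both singularities are
integrable because `γ > -1`, and over an interval of length `L` each term integrates to `≲ L^{γ+1}`;
here `L = κ²(b-a)`.
-/

open Real

lemma rpow_mul_exp_neg_le {a v : ℝ} (ha : 0 < a) (hv : 0 ≤ v) :
    v ^ a * exp (-v) ≤ a ^ a * exp (-a) := by
  have key : ((v / a) * exp (-(v / a))) ^ a ≤ exp (-1) ^ a :=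
    rpow_le_rpow (by positivity) (mul_exp_neg_le_exp_neg_one _) ha.le
  rw [mul_rpow (by positivity) (exp_pos _).le, div_rpow hv ha.le, ← exp_mul, ← exp_mul,
    show -(v / a) * a = -v by field_simp, neg_one_mul, div_mul_eq_mul_div,
    div_le_iff₀ (by positivity)] at key
  linarith

lemma rpow_mul_exp_neg_sq_div_le {γ c : ℝ} (hγ : γ < 0) (hc : 0 < c) :
    ∃ K, 0 < K ∧ ∀ s r : ℝ, 0 < s → 0 < r → r ^ γ * exp (-(s ^ 2) / (c * r ^ 2)) ≤ K * s ^ γ := by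
  set a := -γ / 2
  have ha : 0 < a := by simp only [a]; linarith
  refine ⟨c ^ a * (a ^ a * exp (-a)), by positivity, fun s r hs hr => ?_⟩
  set v := s ^ 2 / (c * r ^ 2)
  have hr_eq : r ^ γ = c ^ a * v ^ a * s ^ γ := by
    rw [← mul_rpow hc.le (by positivity), show c * v = (s / r) ^ (2 : ℕ) by
      simp only [v]; field_simp, ← rpow_natCast_mul (by positivity), div_rpow hs.le hr.le]
    rw [show ((2 : ℕ) : ℝ) * a = -γ by simp only [a]; push_cast; ring, rpow_neg hs.le,
      rpow_neg hr.le]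
    field_simp
  rw [neg_div, hr_eq]
  calc c ^ a * v ^ a * s ^ γ * exp (-v) = c ^ a * (v ^ a * exp (-v)) * s ^ γ := by ring
    _ ≤ c ^ a * (a ^ a * exp (-a)) * s ^ γ := by
      have := rpow_mul_exp_neg_le ha (show 0 ≤ v by positivity)
      gcongr

lemma rpow_le_two_rpow_abs_mul_rpow {u v : ℝ} (hu : 0 < u) (hv : 0 < v) (huv : u ≤ 2 * v)
    (hvu : v ≤ 2 * u) (p : ℝ) : u ^ p ≤ 2 ^ |p| * v ^ p := by
  rcases le_or_gt 0 p with hp | hp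
  · rw [abs_of_nonneg hp, ← mul_rpow zero_le_two hv.le]
    exact rpow_le_rpow hu.le huv hp
  · rw [abs_of_neg hp, rpow_neg zero_le_two, ← div_eq_inv_mul, ← div_rpow hv.le zero_le_two]
    exact rpow_le_rpow_of_nonpos (by positivity) (by linarith) hp.le

lemma rpow_div_add_rpow_mul_rpow_le {x r p γ : ℝ} (hx : 0 < x) (hr : 0 < r) (hγp : γ ≤ p) :
    x ^ p / (x + r) ^ p * r ^ γ ≤ 2 ^ |p| * (r ^ γ + x ^ γ) := by
  have hxr : 0 < (x + r) ^ p := by positivity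
  rcases le_total r x with hrx | hxr'
  · have hratio : x ^ p / (x + r) ^ p ≤ 2 ^ |p| := by
      rw [div_le_iff₀ hxr]
      exact rpow_le_two_rpow_abs_mul_rpow hx (by linarith) (by linarith) (by linarith) p
    calc x ^ p / (x + r) ^ p * r ^ γ ≤ 2 ^ |p| * r ^ γ := by gcongr
      _ ≤ 2 ^ |p| * (r ^ γ + x ^ γ) := by gcongr; exact le_add_of_nonneg_right (by positivity)
  · have hr_le : r ^ p ≤ 2 ^ |p| * (x + r) ^ p :=
      rpow_le_two_rpow_abs_mul_rpow hr (by linarith) (by linarith) (by linarith) p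
    have hpow : r ^ γ / r ^ p ≤ x ^ γ / x ^ p := by
      rw [← rpow_sub hr, ← rpow_sub hx]
      exact rpow_le_rpow_of_nonpos hx hxr' (by linarith)
    calc x ^ p / (x + r) ^ p * r ^ γ = x ^ p * (r ^ γ / r ^ p) * (r ^ p / (x + r) ^ p) := by
          field_simp
      _ ≤ x ^ p * (x ^ γ / x ^ p) * 2 ^ |p| := by
          gcongr
          rwa [div_le_iff₀ hxr]
      _ = 2 ^ |p| * x ^ γ := by field_simp
      _ ≤ 2 ^ |p| * (r ^ γ + x ^ γ) := by gcongr; exact le_add_of_nonneg_left (by positivity)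

lemma setLIntegral_besselMeasure (ν : ℝ) (f : ℝ → ENNReal) {s : Set ℝ} (hs : MeasurableSet s) :
    ∫⁻ x in s, f x ∂besselMeasure ν = ∫⁻ x in s ∩ Ioi 0, ENNReal.ofReal (x ^ (2*ν+1)) * f x := by
  rw [besselMeasure, setLIntegral_withDensity_eq_setLIntegral_mul_non_measurable _ (by fun_prop)
    f hs (ae_of_all _ fun _ => ENNReal.ofReal_lt_top), Measure.restrict_restrict hs]
  rfl

lemma ofReal_le_besselMeasure_ball (ν : ℝ) {x r : ℝ} (hx : 0 ≤ x) (hr : 0 < r) :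
    ENNReal.ofReal (r * (x + r) ^ (2*ν+1) / (2 * 2 ^ |2*ν+1|))
      ≤ besselMeasure ν (Metric.ball x r) := by
  set p := 2*ν+1
  have hsub : Ioo (x + r / 2) (x + r) ⊆ Metric.ball x r ∩ Ioi 0 := fun z hz =>
    ⟨by rw [Metric.mem_ball, dist_eq, abs_lt]; constructor <;> linarith [hz.1, hz.2],
      show 0 < z by linarith [hz.1]⟩
  calc ENNReal.ofReal (r * (x + r) ^ p / (2 * 2 ^ |p|))
      = ∫⁻ _ in Ioo (x + r / 2) (x + r), ENNReal.ofReal ((x + r) ^ p / 2 ^ |p|) := by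
        rw [setLIntegral_const, volume_Ioo, ← ENNReal.ofReal_mul (by positivity)]
        congr 1
        field_simp
        ring
    _ ≤ ∫⁻ z in Ioo (x + r / 2) (x + r), ENNReal.ofReal (z ^ p) := by
        refine setLIntegral_mono' measurableSet_Ioo fun z hz => ENNReal.ofReal_le_ofReal ?_
        rw [div_le_iff₀' (by positivity)]
        exact rpow_le_two_rpow_abs_mul_rpow (by linarith) (by linarith [hz.1]) (by linarith [hz.1])
          (by linarith [hz.2]) p
    _ ≤ ∫⁻ z in Metric.ball x r ∩ Ioi 0, ENNReal.ofReal (z ^ p) := lintegral_mono_set hsub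
    _ = besselMeasure ν (Metric.ball x r) := by
        rw [besselMeasure, withDensity_apply _ measurableSet_ball,
          Measure.restrict_restrict measurableSet_ball]

lemma ofReal_rpow_mul_inv_besselMeasure_ball_le (ν : ℝ) {x r : ℝ} (hx : 0 ≤ x) (hr : 0 < r)
    (g : ℝ) :
    ENNReal.ofReal (x ^ (2*ν+1)) * ((besselMeasure ν (Metric.ball x r))⁻¹ * ENNReal.ofReal (r * g))
      ≤ ENNReal.ofReal (2 * 2 ^ |2*ν+1| * (x ^ (2*ν+1) / (x + r) ^ (2*ν+1)) * g) := by
  set p := 2*ν+1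
  have hD : 0 < r * (x + r) ^ p / (2 * 2 ^ |p|) := by positivity
  calc ENNReal.ofReal (x ^ p) * ((besselMeasure ν (Metric.ball x r))⁻¹ * ENNReal.ofReal (r * g))
      ≤ ENNReal.ofReal (x ^ p) *
          ((ENNReal.ofReal (r * (x + r) ^ p / (2 * 2 ^ |p|)))⁻¹ * ENNReal.ofReal (r * g)) := by
        gcongr
        exact ofReal_le_besselMeasure_ball ν hx hr
    _ = ENNReal.ofReal (2 * 2 ^ |p| * (x ^ p / (x + r) ^ p) * g) := by
        rw [← ENNReal.ofReal_inv_of_pos hD, ← ENNReal.ofReal_mul (by positivity),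
          ← ENNReal.ofReal_mul (by positivity)]
        congr 1
        field_simp

noncomputable def supGauss (ν δ c x y : ℝ) : ENNReal :=
  ⨆ (t : ℝ) (_ : 0 < t), (besselMeasure ν (Metric.ball x (Real.sqrt t)))⁻¹ *
    ENNReal.ofReal (t ^ δ * Real.exp (-(|x - y| ^ 2) / (c * t)))

lemma ofReal_rpow_mul_supGauss_le {ν δ c : ℝ} (hδ : δ < 1 / 2) (hδν : δ ≤ ν + 1) (hc : 0 < c) :
    ∃ C, 0 < C ∧ ∀ x y : ℝ, 0 < x → x ≠ y →
      ENNReal.ofReal (x ^ (2*ν+1)) * supGauss ν δ c x y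
        ≤ ENNReal.ofReal C * ENNReal.ofReal (|x - y| ^ (2*δ-1) + x ^ (2*δ-1)) := by
  obtain ⟨K, hK, hgauss⟩ := rpow_mul_exp_neg_sq_div_le (γ := 2*δ-1) (by linarith) hc
  set p := 2*ν+1
  set γ := 2*δ-1
  have hγp : γ ≤ p := by simp only [γ, p]; linarith
  refine ⟨2 * 2 ^ |p| * 2 ^ |p| * max K 1, by positivity, fun x y hx hxy => ?_⟩
  set s := |x - y|
  have hs : 0 < s := abs_pos.2 (sub_ne_zero.2 hxy)
  simp only [supGauss, ENNReal.mul_iSup]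
  refine iSup₂_le fun t ht => ?_
  obtain ⟨r, hr, rfl⟩ : ∃ r, 0 < r ∧ r ^ 2 = t := ⟨√t, sqrt_pos.2 ht, sq_sqrt ht.le⟩
  set E := exp (-(s ^ 2) / (c * r ^ 2))
  have hE : E ≤ 1 :=
    exp_le_one_iff.2 (div_nonpos_of_nonpos_of_nonneg (neg_nonpos.2 (sq_nonneg s)) (by positivity))
  have hr2δ : (r ^ 2) ^ δ = r * r ^ γ := by
    rw [← rpow_natCast, ← rpow_mul hr.le,
      show ((2 : ℕ) : ℝ) * δ = 1 + γ by simp only [γ]; push_cast; ring, rpow_add hr, rpow_one]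
  rw [sqrt_sq hr.le, hr2δ, mul_assoc r]
  refine (ofReal_rpow_mul_inv_besselMeasure_ball_le ν hx.le hr _).trans ?_
  rw [← ENNReal.ofReal_mul (by positivity)]
  refine ENNReal.ofReal_le_ofReal ?_
  calc 2 * 2 ^ |p| * (x ^ p / (x + r) ^ p) * (r ^ γ * E)
      = 2 * 2 ^ |p| * (x ^ p / (x + r) ^ p * r ^ γ) * E := by ring
    _ ≤ 2 * 2 ^ |p| * (2 ^ |p| * (r ^ γ + x ^ γ)) * E := by
        gcongr 2 * 2 ^ |p| * ?_ * E
        exact rpow_div_add_rpow_mul_rpow_le hx hr hγp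
    _ = 2 * 2 ^ |p| * 2 ^ |p| * (r ^ γ * E + x ^ γ * E) := by ring
    _ ≤ 2 * 2 ^ |p| * 2 ^ |p| * (K * s ^ γ + x ^ γ) := by
        gcongr ?_ * (?_ + ?_)
        · exact hgauss s r hs hr
        · exact mul_le_of_le_one_right (by positivity) hE
    _ ≤ 2 * 2 ^ |p| * 2 ^ |p| * (max K 1 * s ^ γ + max K 1 * x ^ γ) := by
        gcongr ?_ * (?_ * _ + ?_)
        · exact le_max_left _ _
        · exact le_mul_of_one_le_left (by positivity) (le_max_right _ _)
    _ = 2 * 2 ^ |p| * 2 ^ |p| * max K 1 * (s ^ γ + x ^ γ) := by ring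

lemma lintegral_Ioc_ofReal_eq_intervalIntegral {f : ℝ → ℝ} {a b : ℝ} (hab : a ≤ b)
    (hf : IntervalIntegrable f volume a b) (hf0 : ∀ x ∈ Ioc a b, 0 ≤ f x) :
    ∫⁻ x in Ioc a b, ENNReal.ofReal (f x) = ENNReal.ofReal (∫ x in a..b, f x) := by
  rw [intervalIntegral.integral_of_le hab, ofReal_integral_eq_lintegral_ofReal
    ((intervalIntegrable_iff_integrableOn_Ioc_of_le hab).1 hf)
    (ae_restrict_of_forall_mem measurableSet_Ioc hf0)]

lemma integral_rpow_comp_sub_right {γ : ℝ} (hγ : -1 < γ) (a b : ℝ) :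
    ∫ x in a..b, (x - a) ^ γ = (b - a) ^ (γ + 1) / (γ + 1) := by
  rw [intervalIntegral.integral_comp_sub_right (fun x => x ^ γ), sub_self,
    integral_rpow (Or.inl hγ), zero_rpow (by linarith), sub_zero]

lemma integral_rpow_comp_sub_left {γ : ℝ} (hγ : -1 < γ) (a b : ℝ) :
    ∫ x in a..b, (b - x) ^ γ = (b - a) ^ (γ + 1) / (γ + 1) := by
  rw [intervalIntegral.integral_comp_sub_left (fun x => x ^ γ), sub_self,
    integral_rpow (Or.inl hγ), zero_rpow (by linarith), sub_zero]

lemma lintegral_Icc_abs_sub_rpow_le_of_mem {γ A B y : ℝ} (hγ : -1 < γ) (hy : y ∈ Icc A B) :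
    ∫⁻ x in Icc A B, ENNReal.ofReal (|x - y| ^ γ)
      ≤ ENNReal.ofReal (2 * (B - A) ^ (γ + 1) / (γ + 1)) := by
  have hγ1 : 0 < γ + 1 := by linarith
  have left : ∫⁻ x in Ioc A y, ENNReal.ofReal (|x - y| ^ γ)
      = ENNReal.ofReal ((y - A) ^ (γ + 1) / (γ + 1)) := by
    rw [setLIntegral_congr_fun measurableSet_Ioc fun x hx => by
        rw [abs_sub_comm, abs_of_nonneg (sub_nonneg.2 hx.2)],
      lintegral_Ioc_ofReal_eq_intervalIntegral hy.1
        (by simpa using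
          (intervalIntegral.intervalIntegrable_rpow' hγ (a := y - A) (b := 0)).comp_sub_left y)
        fun x hx => rpow_nonneg (sub_nonneg.2 hx.2) _,
      integral_rpow_comp_sub_left hγ]
  have right : ∫⁻ x in Ioc y B, ENNReal.ofReal (|x - y| ^ γ)
      = ENNReal.ofReal ((B - y) ^ (γ + 1) / (γ + 1)) := by
    rw [setLIntegral_congr_fun measurableSet_Ioc fun x hx => by
        rw [abs_of_nonneg (sub_nonneg.2 hx.1.le)],
      lintegral_Ioc_ofReal_eq_intervalIntegral hy.2
        (by simpa using
          (intervalIntegral.intervalIntegrable_rpow' hγ (a := 0) (b := B - y)).comp_sub_right y)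
        fun x hx => rpow_nonneg (sub_nonneg.2 hx.1.le) _,
      integral_rpow_comp_sub_right hγ]
  have hyA : (y - A) ^ (γ + 1) ≤ (B - A) ^ (γ + 1) :=
    rpow_le_rpow (sub_nonneg.2 hy.1) (by linarith [hy.2]) hγ1.le
  have hBy : (B - y) ^ (γ + 1) ≤ (B - A) ^ (γ + 1) :=
    rpow_le_rpow (sub_nonneg.2 hy.2) (by linarith [hy.1]) hγ1.le
  calc ∫⁻ x in Icc A B, ENNReal.ofReal (|x - y| ^ γ)
      = ∫⁻ x in Ioc A y ∪ Ioc y B, ENNReal.ofReal (|x - y| ^ γ) := by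
        rw [Ioc_union_Ioc_eq_Ioc hy.1 hy.2, setLIntegral_congr Ioc_ae_eq_Icc]
    _ ≤ ENNReal.ofReal ((y - A) ^ (γ + 1) / (γ + 1))
          + ENNReal.ofReal ((B - y) ^ (γ + 1) / (γ + 1)) :=
        (lintegral_union_le _ _ _).trans_eq (by rw [left, right])
    _ ≤ ENNReal.ofReal (2 * (B - A) ^ (γ + 1) / (γ + 1)) := by
        rw [← ENNReal.ofReal_add (div_nonneg (rpow_nonneg (sub_nonneg.2 hy.1) _) hγ1.le)
          (div_nonneg (rpow_nonneg (sub_nonneg.2 hy.2) _) hγ1.le), ← add_div]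
        gcongr
        linarith

lemma lintegral_Icc_abs_sub_rpow_le {γ A B : ℝ} (hγ : -1 < γ) (hγ0 : γ ≤ 0) (hAB : A ≤ B)
    (y : ℝ) :
    ∫⁻ x in Icc A B, ENNReal.ofReal (|x - y| ^ γ)
      ≤ ENNReal.ofReal (2 * (B - A) ^ (γ + 1) / (γ + 1)) := by
  -- Projecting `y` onto `[A, B]` brings it closer to every point of `[A, B]`, and `γ ≤ 0`.
  set y' : ℝ := (projIcc A B hAB y : ℝ)
  refine le_trans (lintegral_mono_ae ?_)
    (lintegral_Icc_abs_sub_rpow_le_of_mem hγ (projIcc A B hAB y).2)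
  filter_upwards [ae_restrict_mem measurableSet_Icc, ae_restrict_of_ae (volume.ae_ne y')]
    with x hx hxy
  have hclose : |x - y'| ≤ |x - y| := by
    simpa [projIcc_of_mem hAB hx] using abs_projIcc_sub_projIcc hAB (c := x) (d := y)
  exact ENNReal.ofReal_le_ofReal
    (rpow_le_rpow_of_nonpos (abs_pos.2 (sub_ne_zero.2 hxy)) hclose hγ0)

lemma lintegral_Icc_inter_Ioi_abs_sub_rpow_add_rpow_le {γ A B : ℝ} (hγ : -1 < γ) (hγ0 : γ ≤ 0)
    (hAB : A ≤ B) (y : ℝ) :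
    ∫⁻ x in Icc A B ∩ Ioi 0, ENNReal.ofReal (|x - y| ^ γ + x ^ γ)
      ≤ ENNReal.ofReal (4 * (B - A) ^ (γ + 1) / (γ + 1)) := by
  have hγ1 : 0 < γ + 1 := by linarith
  calc ∫⁻ x in Icc A B ∩ Ioi 0, ENNReal.ofReal (|x - y| ^ γ + x ^ γ)
      ≤ ∫⁻ x in Icc A B ∩ Ioi 0, ENNReal.ofReal (|x - y| ^ γ) + ENNReal.ofReal (|x - 0| ^ γ) :=
        setLIntegral_mono' (measurableSet_Icc.inter measurableSet_Ioi) fun x hx => by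
          rw [sub_zero, abs_of_pos (show (0 : ℝ) < x from hx.2)]
          exact ENNReal.ofReal_add_le
    _ ≤ ∫⁻ x in Icc A B, ENNReal.ofReal (|x - y| ^ γ) + ENNReal.ofReal (|x - 0| ^ γ) :=
        lintegral_mono_set inter_subset_left
    _ = (∫⁻ x in Icc A B, ENNReal.ofReal (|x - y| ^ γ))
          + ∫⁻ x in Icc A B, ENNReal.ofReal (|x - 0| ^ γ) :=
        lintegral_add_left (by fun_prop : Measurable fun x : ℝ => ENNReal.ofReal (|x - y| ^ γ)) _
    _ ≤ ENNReal.ofReal (2 * (B - A) ^ (γ + 1) / (γ + 1))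
          + ENNReal.ofReal (2 * (B - A) ^ (γ + 1) / (γ + 1)) :=
        add_le_add (lintegral_Icc_abs_sub_rpow_le hγ hγ0 hAB y)
          (lintegral_Icc_abs_sub_rpow_le hγ hγ0 hAB 0)
    _ = ENNReal.ofReal (4 * (B - A) ^ (γ + 1) / (γ + 1)) := by
        rw [← ENNReal.ofReal_add (by positivity) (by positivity)]
        ring_nf

lemma setLIntegral_Icc_supGauss_le {ν δ c : ℝ} (hδ0 : 0 < δ) (hδ : δ < 1 / 2) (hδν : δ ≤ ν + 1)
    (hc : 0 < c) :
    ∃ C, 0 < C ∧ ∀ A B y : ℝ, A ≤ B →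
      ∫⁻ x in Icc A B, supGauss ν δ c x y ∂besselMeasure ν
        ≤ ENNReal.ofReal (C * (B - A) ^ (2 * δ)) := by
  obtain ⟨C, hC, hpointwise⟩ := ofReal_rpow_mul_supGauss_le hδ hδν hc
  refine ⟨C * (4 / (2 * δ)), by positivity, fun A B y hAB => ?_⟩
  have hint := lintegral_Icc_inter_Ioi_abs_sub_rpow_add_rpow_le (γ := 2 * δ - 1) (by linarith)
    (by linarith) hAB y
  rw [sub_add_cancel] at hint
  calc ∫⁻ x in Icc A B, supGauss ν δ c x y ∂besselMeasure ν
      = ∫⁻ x in Icc A B ∩ Ioi 0, ENNReal.ofReal (x ^ (2*ν+1)) * supGauss ν δ c x y :=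
        setLIntegral_besselMeasure ν _ measurableSet_Icc
    _ ≤ ∫⁻ x in Icc A B ∩ Ioi 0,
          ENNReal.ofReal C * ENNReal.ofReal (|x - y| ^ (2*δ-1) + x ^ (2*δ-1)) := by
        refine lintegral_mono_ae ?_
        filter_upwards [ae_restrict_mem (measurableSet_Icc.inter measurableSet_Ioi),
          ae_restrict_of_ae (volume.ae_ne y)] with x hx hxy
        exact hpointwise x y hx.2 hxy
    _ = ENNReal.ofReal C * ∫⁻ x in Icc A B ∩ Ioi 0,
          ENNReal.ofReal (|x - y| ^ (2*δ-1) + x ^ (2*δ-1)) :=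
        lintegral_const_mul' _ _ ENNReal.ofReal_ne_top
    _ ≤ ENNReal.ofReal C * ENNReal.ofReal (4 * (B - A) ^ (2 * δ) / (2 * δ)) := by gcongr
    _ = ENNReal.ofReal (C * (4 / (2 * δ)) * (B - A) ^ (2 * δ)) := by
        rw [← ENNReal.ofReal_mul hC.le]
        ring_nf

theorem lintegral_sup_gauss_enlargement_le_general (ν δ c κ : ℝ)
    (hδ0 : 0 < δ) (hδ : δ < min (1/2) (ν + 1)) (hc : 0 < c) (hκ : 1 < κ) :
    ∃ C : ℝ, 0 < C ∧ ∀ a b : ℝ, 0 < a → a < b → ∀ y ∈ enl κ a b,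
      (∫⁻ x in enl (κ^2) a b,
          ⨆ (t : ℝ) (_ : 0 < t),
            (besselMeasure ν (Metric.ball x (Real.sqrt t)))⁻¹ *
              ENNReal.ofReal (t ^ δ * Real.exp (-(|x - y|^2) / (c * t)))
        ∂(besselMeasure ν))
      ≤ ENNReal.ofReal (C * (b - a) ^ (2 * δ)) := by
  obtain ⟨C, hC, hint⟩ := setLIntegral_Icc_supGauss_le hδ0 (hδ.trans_le (min_le_left _ _))
    (hδ.le.trans (min_le_right _ _)) hc
  have hκ0 : 0 < κ := by linarith
  refine ⟨C * (κ ^ 2) ^ (2 * δ), by positivity, fun a b _ hab y _ => ?_⟩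
  have hlen : 0 < κ ^ 2 * (b - a) := mul_pos (by positivity) (sub_pos.2 hab)
  refine (hint _ _ y (by linarith)).trans_eq ?_
  rw [show (a + b) / 2 + κ ^ 2 * (b - a) / 2 - ((a + b) / 2 - κ ^ 2 * (b - a) / 2)
      = κ ^ 2 * (b - a) by ring, mul_rpow (by positivity) (by linarith), mul_assoc]

theorem lintegral_sup_gauss_enlargement_le (ν δ c κ : ℝ) (hν : -1 < ν)
    (hδ0 : 0 < δ) (hδ : δ < min (1/2) (ν + 1)) (hc : 0 < c) (hκ : 1 < κ) :
    ∃ C : ℝ, 0 < C ∧ ∀ a b : ℝ, 0 < a → a < b → ∀ y ∈ enl κ a b,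
      (∫⁻ x in enl (κ^2) a b,
          ⨆ (t : ℝ) (_ : 0 < t),
            (besselMeasure ν (Metric.ball x (Real.sqrt t)))⁻¹ *
              ENNReal.ofReal (t ^ δ * Real.exp (-(|x - y|^2) / (c * t)))
        ∂(besselMeasure ν))
      ≤ ENNReal.ofReal (C * (b - a) ^ (2 * δ)) :=
  lintegral_sup_gauss_enlargement_le_general ν δ c κ hδ0 hδ hc hκ
end
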